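/- arXiv:2205.02723 — 6 statements merged into one kernel-verified Lean document; each statement's English description precedes it below -/
import Mathlib

section
/- Let P be the block-diagonal matrix diag(A_1, …, A_p, I_m), i.e., P maps (x_1,…,x_p,λ) to (A_1x_1,…,A_px_p,λ), and let Q be the ((Σ n_i)+m)-square block matrix whose (i,i) block is β A_iᵀA_i for 1 ≤ i ≤ p, whose (i,p+1) block is A_iᵀ, whose (p+1,i) block is −A_i for 1 ≤ i ≤ p, whose (p+1,p+1) block is (1/β)I_m, and whose other blocks vanish. Then Q = Pᵀ𝒬P and 𝒬ᵀ + 𝒬 = 2𝒟. -/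
open Matrix
open scoped Kronecker

noncomputable section

/-- `Q₀ = [β I_p, e_p; −e_pᵀ, 1/β]`. -/
def Q0 (p : ℕ) (β : ℝ) : Matrix (Fin p ⊕ Unit) (Fin p ⊕ Unit) ℝ :=
  Matrix.fromBlocks (β • (1 : Matrix (Fin p) (Fin p) ℝ))
    (Matrix.of fun _ _ => (1 : ℝ))
    (Matrix.of fun _ _ => (-1 : ℝ))
    (Matrix.of fun _ _ => 1 / β)

/-- `D₀ = diag(β, …, β, 1/β)`. -/
def D0 (p : ℕ) (β : ℝ) : Matrix (Fin p ⊕ Unit) (Fin p ⊕ Unit) ℝ :=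
  Matrix.fromBlocks (β • (1 : Matrix (Fin p) (Fin p) ℝ)) 0 0
    (Matrix.of fun _ _ => 1 / β)

/-- `M₀ = I_{p+1} − (1/(p+1))·[e_p e_pᵀ, −(1/β)e_p; β e_pᵀ, p]`. -/
def M0 (p : ℕ) (β : ℝ) : Matrix (Fin p ⊕ Unit) (Fin p ⊕ Unit) ℝ :=
  1 - (1 / (p + 1 : ℝ)) •
    Matrix.fromBlocks (Matrix.of fun _ _ => (1 : ℝ))
      (Matrix.of fun _ _ => -(1 / β))
      (Matrix.of fun _ _ => (β : ℝ))
      (Matrix.of fun _ _ => (p : ℝ))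

/-- `H₀ = [β(I_p + e_p e_pᵀ), 0; 0, (p+1)/β]`. -/
def H0 (p : ℕ) (β : ℝ) : Matrix (Fin p ⊕ Unit) (Fin p ⊕ Unit) ℝ :=
  Matrix.fromBlocks (β • ((1 : Matrix (Fin p) (Fin p) ℝ) + Matrix.of fun _ _ => (1 : ℝ))) 0 0
    (Matrix.of fun _ _ => (p + 1 : ℝ) / β)

/-- `𝒬 = Q₀ ⊗ I_m`. -/
def calQ (p m : ℕ) (β : ℝ) : Matrix ((Fin p ⊕ Unit) × Fin m) ((Fin p ⊕ Unit) × Fin m) ℝ :=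
  Q0 p β ⊗ₖ (1 : Matrix (Fin m) (Fin m) ℝ)

/-- `𝒟 = D₀ ⊗ I_m`. -/
def calD (p m : ℕ) (β : ℝ) : Matrix ((Fin p ⊕ Unit) × Fin m) ((Fin p ⊕ Unit) × Fin m) ℝ :=
  D0 p β ⊗ₖ (1 : Matrix (Fin m) (Fin m) ℝ)

/-- `ℳ = M₀ ⊗ I_m`. -/
def calM (p m : ℕ) (β : ℝ) : Matrix ((Fin p ⊕ Unit) × Fin m) ((Fin p ⊕ Unit) × Fin m) ℝ :=
  M0 p β ⊗ₖ (1 : Matrix (Fin m) (Fin m) ℝ)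

/-- `ℋ = H₀ ⊗ I_m`. -/
def calH (p m : ℕ) (β : ℝ) : Matrix ((Fin p ⊕ Unit) × Fin m) ((Fin p ⊕ Unit) × Fin m) ℝ :=
  H0 p β ⊗ₖ (1 : Matrix (Fin m) (Fin m) ℝ)

/-- `‖v‖²_G = vᵀ G v`. -/
def nsq {p m : ℕ} (G : Matrix ((Fin p ⊕ Unit) × Fin m) ((Fin p ⊕ Unit) × Fin m) ℝ)
    (v : (Fin p ⊕ Unit) × Fin m → ℝ) : ℝ :=
  v ⬝ᵥ G.mulVec v

/-- `θ(x) = Σ_i θ_i(x_i)`. -/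
def thetaSum {p : ℕ} {n : Fin p → ℕ} (θ : (i : Fin p) → (Fin (n i) → ℝ) → ℝ)
    (x : (i : Fin p) → Fin (n i) → ℝ) : ℝ :=
  ∑ i, θ i (x i)

/-- The Euclidean inner product on `ℝ^{n_1}×⋯×ℝ^{n_p}×ℝ^m`. -/
def dotW {p m : ℕ} {n : Fin p → ℕ}
    (w w' : ((i : Fin p) → Fin (n i) → ℝ) × (Fin m → ℝ)) : ℝ :=
  (∑ i, w.1 i ⬝ᵥ w'.1 i) + w.2 ⬝ᵥ w'.2

/-- `F(w) = (−A_1ᵀλ, …, −A_pᵀλ, Σ_i A_i x_i − b)`. -/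
def Fop {p m : ℕ} {n : Fin p → ℕ} (A : (i : Fin p) → Matrix (Fin m) (Fin (n i)) ℝ)
    (b : Fin m → ℝ) (w : ((i : Fin p) → Fin (n i) → ℝ) × (Fin m → ℝ)) :
    ((i : Fin p) → Fin (n i) → ℝ) × (Fin m → ℝ) :=
  (fun i => -((A i)ᵀ.mulVec w.2), (∑ i, (A i).mulVec (w.1 i)) - b)

/-- `Pw = (A_1 x_1, …, A_p x_p, λ) ∈ ℝ^{(p+1)m}`. -/
def Pmap {p m : ℕ} {n : Fin p → ℕ} (A : (i : Fin p) → Matrix (Fin m) (Fin (n i)) ℝ)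
    (w : ((i : Fin p) → Fin (n i) → ℝ) × (Fin m → ℝ)) :
    (Fin p ⊕ Unit) × Fin m → ℝ :=
  fun q => Sum.elim (fun i => (A i).mulVec (w.1 i) q.2) (fun _ => w.2 q.2) q.1

/-- `Ω = 𝒳_1 × ⋯ × 𝒳_p × ℝ^m`. -/
def OmegaSet {p : ℕ} (m : ℕ) {n : Fin p → ℕ} (X : (i : Fin p) → Set (Fin (n i) → ℝ)) :
    Set (((i : Fin p) → Fin (n i) → ℝ) × (Fin m → ℝ)) :=
  {w | ∀ i, w.1 i ∈ X i}

/-- The solution set `Ω*` of the variational inequality VI(Ω,F,θ). -/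
def VIsol {p m : ℕ} {n : Fin p → ℕ} (θ : (i : Fin p) → (Fin (n i) → ℝ) → ℝ)
    (X : (i : Fin p) → Set (Fin (n i) → ℝ))
    (A : (i : Fin p) → Matrix (Fin m) (Fin (n i)) ℝ) (b : Fin m → ℝ) :
    Set (((i : Fin p) → Fin (n i) → ℝ) × (Fin m → ℝ)) :=
  {ws | ws ∈ OmegaSet m X ∧ ∀ w ∈ OmegaSet m X,
    thetaSum θ w.1 - thetaSum θ ws.1 + dotW (w - ws) (Fop A b ws) ≥ 0}

/-- The `λ`-component of `ξ = (u_1, …, u_p, λ)`. -/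
def lamOf {p m : ℕ} (ξ : (Fin p ⊕ Unit) × Fin m → ℝ) : Fin m → ℝ :=
  fun j => ξ (Sum.inr (), j)

/-- The `u_i`-component of `ξ = (u_1, …, u_p, λ)`. -/
def uOf {p m : ℕ} (ξ : (Fin p ⊕ Unit) × Fin m → ℝ) (i : Fin p) : Fin m → ℝ :=
  fun j => ξ (Sum.inl i, j)

/-- The parallel splitting ALM step: with input `ξ = (u_1, …, u_p, λ)` it produces
`w̃ = (x̃_1, …, x̃_p, λ̃)` where each `x̃_i ∈ 𝒳_i` minimizes
`x_i ↦ θ_i(x_i) − λᵀ A_i x_i + (β/2)‖A_i x_i − u_i‖²` over `𝒳_i`, and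
`λ̃ = λ − β(Σ_i u_i − b)`. -/
def ALMStep {p m : ℕ} {n : Fin p → ℕ} (β : ℝ) (θ : (i : Fin p) → (Fin (n i) → ℝ) → ℝ)
    (X : (i : Fin p) → Set (Fin (n i) → ℝ))
    (A : (i : Fin p) → Matrix (Fin m) (Fin (n i)) ℝ) (b : Fin m → ℝ)
    (ξ : (Fin p ⊕ Unit) × Fin m → ℝ)
    (wt : ((i : Fin p) → Fin (n i) → ℝ) × (Fin m → ℝ)) : Prop :=
  (∀ i, wt.1 i ∈ X i ∧ ∀ y ∈ X i,
      θ i (wt.1 i) - lamOf ξ ⬝ᵥ (A i).mulVec (wt.1 i) +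
          β / 2 * (((A i).mulVec (wt.1 i) - uOf ξ i) ⬝ᵥ ((A i).mulVec (wt.1 i) - uOf ξ i)) ≤
        θ i y - lamOf ξ ⬝ᵥ (A i).mulVec y +
          β / 2 * (((A i).mulVec y - uOf ξ i) ⬝ᵥ ((A i).mulVec y - uOf ξ i))) ∧
  wt.2 = lamOf ξ - β • ((∑ i, uOf ξ i) - b)

/-- The block diagonal matrix `P = diag(A_1, …, A_p, I_m)`, mapping `(x_1,…,x_p,λ)` to
`(A_1x_1,…,A_px_p,λ)`. -/
def Pmat {p m : ℕ} {n : Fin p → ℕ} (A : (i : Fin p) → Matrix (Fin m) (Fin (n i)) ℝ) :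
    Matrix ((Fin p ⊕ Unit) × Fin m) ((Σ i : Fin p, Fin (n i)) ⊕ Fin m) ℝ :=
  fun q r =>
    match q, r with
    | (Sum.inl i, j), Sum.inl s => if h : s.1 = i then A i j (Fin.cast (congrArg n h) s.2) else 0
    | (Sum.inl _, _), Sum.inr _ => 0
    | (Sum.inr _, _), Sum.inl _ => 0
    | (Sum.inr _, j), Sum.inr j' => if j' = j then 1 else 0

/-- The `((Σ n_i)+m)`-square block matrix `Q` whose `(i,i)` block is `β A_iᵀA_i`, whose
`(i,p+1)` block is `A_iᵀ`, whose `(p+1,i)` block is `−A_i`, whose `(p+1,p+1)` block is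
`(1/β)I_m`, and whose other blocks vanish. -/
def Qmat {p m : ℕ} {n : Fin p → ℕ} (β : ℝ) (A : (i : Fin p) → Matrix (Fin m) (Fin (n i)) ℝ) :
    Matrix ((Σ i : Fin p, Fin (n i)) ⊕ Fin m) ((Σ i : Fin p, Fin (n i)) ⊕ Fin m) ℝ :=
  fun r s =>
    match r, s with
    | Sum.inl r', Sum.inl s' =>
        if h : s'.1 = r'.1 then
          β * ((A r'.1)ᵀ * A r'.1) r'.2 (Fin.cast (congrArg n h) s'.2)
        else 0
    | Sum.inl r', Sum.inr k => (A r'.1)ᵀ r'.2 k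
    | Sum.inr k, Sum.inl s' => -(A s'.1 k s'.2)
    | Sum.inr k, Sum.inr k' => if k = k' then 1 / β else 0

/-- `Q = Pᵀ𝒬P` and `𝒬ᵀ + 𝒬 = 2𝒟`. -/
theorem stmt2 {p m : ℕ} {n : Fin p → ℕ} (hp : 1 ≤ p) (hm : 1 ≤ m) {β : ℝ} (hβ : 0 < β)
    (A : (i : Fin p) → Matrix (Fin m) (Fin (n i)) ℝ) :
    Qmat β A = (Pmat A)ᵀ * calQ p m β * Pmat A ∧
      (calQ p m β)ᵀ + calQ p m β = (2 : ℝ) • calD p m β := by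
  constructor
  · ext r s
    rcases r with r' | k <;> rcases s with s' | k' <;>
      simp [Qmat, Pmat, calQ, Q0, Matrix.mul_apply, Matrix.transpose_apply,
        Fintype.sum_prod_type, Fintype.sum_sum_type, Matrix.one_apply, mul_ite, ite_mul,
        Finset.mul_sum, Finset.sum_mul]
    · obtain ⟨i, a⟩ := r'
      obtain ⟨i', a'⟩ := s'
      rcases eq_or_ne i' i with h | h
      · subst h
        simp only [dif_pos rfl, if_pos rfl]
        exact Finset.sum_congr rfl fun x _ => by rw [Fin.cast_eq_self]; ring
      · rw [dif_neg h, if_neg (Ne.symm h)]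
    · simp [eq_comm]
  · ext ⟨a, j⟩ ⟨a', j'⟩
    rcases a with i | _ <;> rcases a' with i' | _ <;>
      simp [calQ, calD, Q0, D0, Matrix.one_apply, Matrix.transpose_apply, eq_comm] <;>
      split_ifs <;> first | rfl | (exfalso; simp_all) | ring
end
end

section
/- The matrix 𝒬 is invertible and 𝒬^{−T}𝒟 = ℳ; equivalently, 𝒬ᵀℳ = 𝒟, where ℳ = M₀ ⊗ I_m with M₀ = I_{p+1} − (1/(p+1))·[e_p e_pᵀ, −(1/β)e_p; β e_pᵀ, p]. In particular, 𝒬^{−T}𝒟 is the sum of the identity and a block rank-two matrix. -/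
open Matrix
open scoped Kronecker

noncomputable section

/-! Write `M₀ = I − N/(p+1)` with `N` the bracketed rank-two matrix. A block computation gives
`Q₀ᵀ N = (p+1)(Q₀ᵀ − D₀)`, hence `Q₀ᵀ M₀ = D₀`. As `D₀` is invertible, so is `Q₀`, and tensoring
with `I_m` transports both facts to `𝒬`, `ℳ`, `𝒟`. -/

section Kronecker

variable {R : Type*} [CommRing R] {ι κ : Type*} [Fintype ι] [Fintype κ] [DecidableEq κ]

theorem Matrix.kronecker_one_transpose_mul_kronecker_one (A B : Matrix ι ι R) :
    (A ⊗ₖ (1 : Matrix κ κ R))ᵀ * (B ⊗ₖ (1 : Matrix κ κ R)) = (Aᵀ * B) ⊗ₖ (1 : Matrix κ κ R) := by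
  rw [← kroneckerMap_transpose, transpose_one, ← mul_kronecker_mul, one_mul]

theorem Matrix.isUnit_kronecker_one [DecidableEq ι] {A : Matrix ι ι R} (hA : IsUnit A) :
    IsUnit (A ⊗ₖ (1 : Matrix κ κ R)) := by
  rw [isUnit_iff_isUnit_det] at hA ⊢
  rw [det_kronecker, det_one, one_pow, mul_one]
  exact hA.pow _

end Kronecker

theorem Matrix.transpose_inv_mul_eq_of_transpose_mul_eq {R ι : Type*} [CommRing R] [Fintype ι]
    [DecidableEq ι] {A M D : Matrix ι ι R} (hA : IsUnit A) (h : Aᵀ * M = D) : Aᵀ⁻¹ * D = M := by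
  rw [← h]
  exact nonsing_inv_mul_cancel_left _ _ (isUnit_det_transpose _ ((isUnit_iff_isUnit_det A).mp hA))

def M0RankTwo (p : ℕ) (β : ℝ) : Matrix (Fin p ⊕ Unit) (Fin p ⊕ Unit) ℝ :=
  fromBlocks (of fun _ _ => (1 : ℝ)) (of fun _ _ => -(1 / β)) (of fun _ _ => β)
    (of fun _ _ => (p : ℝ))

section Blocks

variable (p : ℕ) {β : ℝ}

theorem Q0_transpose_mul_M0RankTwo (hβ : β ≠ 0) :
    (Q0 p β)ᵀ * M0RankTwo p β = (p + 1 : ℝ) • ((Q0 p β)ᵀ - D0 p β) := by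
  ext (i | _) (j | _) <;>
    simp [Q0, M0RankTwo, D0, mul_apply, Fintype.sum_sum_type, one_apply, hβ, mul_comm, eq_comm]

theorem Q0_transpose_mul_M0 (hβ : β ≠ 0) : (Q0 p β)ᵀ * M0 p β = D0 p β := by
  have hp : (p + 1 : ℝ) ≠ 0 := by positivity
  change (Q0 p β)ᵀ * (1 - (1 / (p + 1 : ℝ)) • M0RankTwo p β) = D0 p β
  rw [mul_sub, mul_one, mul_smul_comm, Q0_transpose_mul_M0RankTwo p hβ, smul_smul,
    one_div_mul_cancel hp, one_smul, sub_sub_cancel]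

theorem isUnit_D0 (hβ : β ≠ 0) : IsUnit (D0 p β) := by
  rw [isUnit_iff_isUnit_det, D0, det_fromBlocks_zero₂₁, det_smul, det_one, det_unique]
  simp [hβ]

theorem isUnit_Q0 (hβ : β ≠ 0) : IsUnit (Q0 p β) := by
  have h := (isUnit_iff_isUnit_det _).mp (isUnit_D0 p hβ)
  rw [← Q0_transpose_mul_M0 p hβ, det_mul, det_transpose] at h
  exact (isUnit_iff_isUnit_det _).mpr (isUnit_of_mul_isUnit_left h)

end Blocks

theorem stmt3_general {p m : ℕ} {β : ℝ} (hβ : 0 < β) :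
    IsUnit (calQ p m β) ∧ (calQ p m β)ᵀ⁻¹ * calD p m β = calM p m β ∧
      (calQ p m β)ᵀ * calM p m β = calD p m β := by
  have hQ : IsUnit (calQ p m β) := isUnit_kronecker_one (isUnit_Q0 p hβ.ne')
  have hQM : (calQ p m β)ᵀ * calM p m β = calD p m β := by
    rw [calQ, calM, calD, kronecker_one_transpose_mul_kronecker_one, Q0_transpose_mul_M0 p hβ.ne']
  exact ⟨hQ, transpose_inv_mul_eq_of_transpose_mul_eq hQ hQM, hQM⟩

/-- `𝒬` is invertible and `𝒬^{−T}𝒟 = ℳ`; equivalently, `𝒬ᵀℳ = 𝒟`. -/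
theorem stmt3 {p m : ℕ} (hp : 1 ≤ p) (hm : 1 ≤ m) {β : ℝ} (hβ : 0 < β) :
    IsUnit (calQ p m β) ∧ (calQ p m β)ᵀ⁻¹ * calD p m β = calM p m β ∧
      (calQ p m β)ᵀ * calM p m β = calD p m β :=
  stmt3_general hβ
end
end

section
/- The matrices satisfy ℋℳ = 𝒬 and ℳᵀℋℳ = 𝒟. -/
open Matrix
open scoped Kronecker

noncomputable section

lemma aux_HM (pp : ℕ) {β : ℝ} (hβ : β ≠ 0) : H0 pp β * M0 pp β = Q0 pp β := by
  have hp1 : (pp : ℝ) + 1 ≠ 0 := by positivity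
  ext i j
  rcases i with i | i <;> rcases j with j | j <;>
    simp [H0, M0, Q0, Matrix.mul_apply, Matrix.one_apply, Fintype.sum_sum_type,
      mul_sub, sub_mul, mul_add, add_mul, mul_ite, ite_mul, mul_zero, zero_mul,
      Finset.sum_sub_distrib, Finset.sum_add_distrib,
      Finset.sum_ite_eq, Finset.sum_ite_eq', Finset.sum_const, Finset.card_univ, mul_comm] <;>
  · (try split_ifs) <;> field_simp <;> try ring

lemma aux_MQ (pp : ℕ) {β : ℝ} (hβ : β ≠ 0) : (M0 pp β)ᵀ * Q0 pp β = D0 pp β := by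
  have hp1 : (pp : ℝ) + 1 ≠ 0 := by positivity
  ext i j
  rcases i with i | i <;> rcases j with j | j <;>
    simp [D0, M0, Q0, Matrix.mul_apply, Matrix.one_apply, Matrix.transpose_apply,
      Fintype.sum_sum_type,
      mul_sub, sub_mul, mul_add, add_mul, mul_ite, ite_mul, mul_zero, zero_mul,
      Finset.sum_sub_distrib, Finset.sum_add_distrib,
      Finset.sum_ite_eq, Finset.sum_ite_eq', Finset.sum_const, Finset.card_univ, mul_comm] <;>
  · (try split_ifs) <;> field_simp <;> try ring

/-- `ℋℳ = 𝒬` and `ℳᵀℋℳ = 𝒟`. -/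
theorem stmt5 {p m : ℕ} (hp : 1 ≤ p) (hm : 1 ≤ m) {β : ℝ} (hβ : 0 < β) :
    calH p m β * calM p m β = calQ p m β ∧
      (calM p m β)ᵀ * calH p m β * calM p m β = calD p m β := by
  have hβ' := hβ.ne'
  have h1 : calH p m β * calM p m β = calQ p m β := by
    rw [calH, calM, calQ, ← Matrix.mul_kronecker_mul, aux_HM p hβ', one_mul]
  refine ⟨h1, ?_⟩
  rw [mul_assoc, h1, calM, calQ, calD, ← Matrix.kroneckerMap_transpose,
    ← Matrix.mul_kronecker_mul, aux_MQ p hβ', Matrix.transpose_one, one_mul]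
end
end

section
/- Let w̃^k = (x̃_1^k, …, x̃_p^k, λ̃^k) be the output of the parallel splitting ALM step with input ξ^k = (u_1^k, …, u_p^k, λ^k). Then w̃^k ∈ Ω and, for every w = (x_1,…,x_p,λ) ∈ Ω with ξ = Pw, one has θ(x) − θ(x̃^k) + (w − w̃^k)ᵀF(w̃^k) ≥ (ξ − ξ̃^k)ᵀ𝒬(ξ^k − ξ̃^k). -/
open Matrix
open scoped Kronecker

noncomputable section

lemma qform {p m : ℕ} (β : ℝ) (v z : (Fin p ⊕ Unit) × Fin m → ℝ) :
  v ⬝ᵥ (calQ p m β).mulVec z =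
    (∑ i : Fin p, ∑ j : Fin m, v (Sum.inl i, j) * (β * z (Sum.inl i, j) + z (Sum.inr (), j)))
    + ∑ j : Fin m, v (Sum.inr (), j) * ((1/β) * z (Sum.inr (), j) - ∑ i : Fin p, z (Sum.inl i, j)) := by
  simp only [calQ, Q0, Matrix.mulVec, dotProduct, Fintype.sum_prod_type, Fintype.sum_sum_type,
    Matrix.kroneckerMap_apply, Matrix.one_apply, mul_ite, ite_mul, mul_one, mul_zero, zero_mul,
    Finset.sum_ite_eq, Finset.mem_univ, if_true, Matrix.fromBlocks_apply₁₁,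
    Matrix.fromBlocks_apply₁₂, Matrix.fromBlocks_apply₂₁, Matrix.fromBlocks_apply₂₂,
    Matrix.smul_apply, Matrix.of_apply, smul_eq_mul, Finset.univ_unique, Finset.sum_singleton]
  congr 1
  · exact Finset.sum_congr rfl fun i _ => Finset.sum_congr rfl fun j _ => by ring
  · exact Finset.sum_congr rfl fun j _ => by
      simp only [neg_one_mul, Finset.sum_neg_distrib]; ring

lemma limstep {c K : ℝ} (hK : 0 ≤ K) (h : ∀ t : ℝ, 0 < t → t ≤ 1 → 0 ≤ c + t * K) : 0 ≤ c := by
  by_contra hc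
  push_neg at hc
  have hden : (0:ℝ) < K + 1 := by linarith
  set t := min 1 (-c / (K + 1)) with htdef
  have ht0 : 0 < t := lt_min one_pos (div_pos (by linarith) hden)
  have ht1 : t ≤ 1 := min_le_left _ _
  have h1 := h t ht0 ht1
  have h2 : t * K ≤ (-c / (K + 1)) * K :=
    mul_le_mul_of_nonneg_right (min_le_right _ _) hK
  have h3 : (-c / (K + 1)) * K < -c := by
    rw [div_mul_eq_mul_div, div_lt_iff₀ hden]
    nlinarith
  linarith

lemma viStep {nn m : ℕ} {β : ℝ} (hβ : 0 < β) (f : (Fin nn → ℝ) → ℝ)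
    (hf : ConvexOn ℝ Set.univ f) (Xi : Set (Fin nn → ℝ)) (hXi : Convex ℝ Xi)
    (A : Matrix (Fin m) (Fin nn) ℝ) (lk u : Fin m → ℝ)
    {xt : Fin nn → ℝ} (hxt : xt ∈ Xi)
    (hmin : ∀ y ∈ Xi,
      f xt - lk ⬝ᵥ A.mulVec xt + β / 2 * ((A.mulVec xt - u) ⬝ᵥ (A.mulVec xt - u)) ≤
        f y - lk ⬝ᵥ A.mulVec y + β / 2 * ((A.mulVec y - u) ⬝ᵥ (A.mulVec y - u)))
    {y : Fin nn → ℝ} (hy : y ∈ Xi) :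
    0 ≤ f y - f xt + (A.mulVec y - A.mulVec xt) ⬝ᵥ (β • (A.mulVec xt - u) - lk) := by
  set d : Fin m → ℝ := A.mulVec y - A.mulVec xt with hd
  set a : Fin m → ℝ := A.mulVec xt - u with ha
  have hDd : 0 ≤ d ⬝ᵥ d := Finset.sum_nonneg fun j _ => mul_self_nonneg _
  apply limstep (K := β / 2 * (d ⬝ᵥ d)) (by positivity)
  intro t ht0 ht1
  have hz : (1 - t) • xt + t • y ∈ Xi :=
    hXi hxt hy (by linarith) (le_of_lt ht0) (by ring)
  have hmin' := hmin _ hz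
  have hconv : f ((1 - t) • xt + t • y) ≤ (1 - t) * f xt + t * f y := by
    have := hf.2 (Set.mem_univ xt) (Set.mem_univ y) (by linarith : (0:ℝ) ≤ 1 - t)
      (le_of_lt ht0) (by ring)
    simpa using this
  have hAz : A.mulVec ((1 - t) • xt + t • y) = A.mulVec xt + t • d := by
    rw [Matrix.mulVec_add, Matrix.mulVec_smul, Matrix.mulVec_smul, hd]
    funext j
    simp [Pi.smul_apply, Pi.sub_apply, Pi.add_apply, smul_eq_mul]
    ring
  rw [hAz] at hmin'
  have e1 : lk ⬝ᵥ (A.mulVec xt + t • d) = lk ⬝ᵥ A.mulVec xt + t * (lk ⬝ᵥ d) := by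
    rw [dotProduct_add, dotProduct_smul]; simp [smul_eq_mul]
  have e2 : (A.mulVec xt + t • d - u) ⬝ᵥ (A.mulVec xt + t • d - u)
      = a ⬝ᵥ a + 2 * t * (a ⬝ᵥ d) + t * t * (d ⬝ᵥ d) := by
    have : A.mulVec xt + t • d - u = a + t • d := by
      funext j; simp [ha, Pi.add_apply, Pi.sub_apply, Pi.smul_apply]; ring
    rw [this, dotProduct_add, add_dotProduct, add_dotProduct, dotProduct_smul,
      smul_dotProduct, smul_dotProduct, dotProduct_comm d a]
    simp [smul_eq_mul]; ring
  have e3 : d ⬝ᵥ (β • a - lk) = β * (a ⬝ᵥ d) - lk ⬝ᵥ d := by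
    rw [dotProduct_sub, dotProduct_smul, dotProduct_comm d a, dotProduct_comm d lk]
    simp [smul_eq_mul]
  rw [e1, e2] at hmin'
  rw [e3]
  have key : 0 ≤ t * ((f y - f xt + (β * (a ⬝ᵥ d) - lk ⬝ᵥ d)) + t * (β / 2 * (d ⬝ᵥ d))) := by
    nlinarith [hmin', hconv]
  nlinarith [key, ht0]

/-- Prediction lemma: if `w̃^k` is the output of the parallel splitting ALM step with input
`ξ^k`, then `w̃^k ∈ Ω` and for all `w ∈ Ω` (with `ξ = Pw`, `ξ̃^k = Pw̃^k`):
`θ(x) − θ(x̃^k) + (w − w̃^k)ᵀF(w̃^k) ≥ (ξ − ξ̃^k)ᵀ𝒬(ξ^k − ξ̃^k)`. -/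
theorem stmt7 {p m : ℕ} {n : Fin p → ℕ} (hp : 1 ≤ p)
    (θ : (i : Fin p) → (Fin (n i) → ℝ) → ℝ) (hθ : ∀ i, ConvexOn ℝ Set.univ (θ i))
    (X : (i : Fin p) → Set (Fin (n i) → ℝ))
    (hXconv : ∀ i, Convex ℝ (X i)) (hXclosed : ∀ i, IsClosed (X i))
    (hXne : ∀ i, (X i).Nonempty)
    (A : (i : Fin p) → Matrix (Fin m) (Fin (n i)) ℝ) (b : Fin m → ℝ)
    {β : ℝ} (hβ : 0 < β)
    (ξk : (Fin p ⊕ Unit) × Fin m → ℝ)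
    (wt : ((i : Fin p) → Fin (n i) → ℝ) × (Fin m → ℝ))
    (hstep : ALMStep β θ X A b ξk wt) :
    wt ∈ OmegaSet m X ∧ ∀ w ∈ OmegaSet m X,
      thetaSum θ w.1 - thetaSum θ wt.1 + dotW (w - wt) (Fop A b wt) ≥
        (Pmap A w - Pmap A wt) ⬝ᵥ (calQ p m β).mulVec (ξk - Pmap A wt) := by
  obtain ⟨hmin, hlam⟩ := hstep
  have hβ0 : β ≠ 0 := ne_of_gt hβ
  have hΩt : wt ∈ OmegaSet m X := fun i => (hmin i).1
  refine ⟨hΩt, fun w hw => ?_⟩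
  have hVI : ∀ i : Fin p, 0 ≤ θ i (w.1 i) - θ i (wt.1 i) +
      ((A i).mulVec (w.1 i) - (A i).mulVec (wt.1 i)) ⬝ᵥ
        (β • ((A i).mulVec (wt.1 i) - uOf ξk i) - lamOf ξk) := fun i =>
    viStep hβ (θ i) (hθ i) (X i) (hXconv i) (A i) (lamOf ξk) (uOf ξk i) (hmin i).1
      (hmin i).2 (hw i)
  have hsum : 0 ≤ ∑ i, (θ i (w.1 i) - θ i (wt.1 i) +
      ((A i).mulVec (w.1 i) - (A i).mulVec (wt.1 i)) ⬝ᵥ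
        (β • ((A i).mulVec (wt.1 i) - uOf ξk i) - lamOf ξk)) :=
    Finset.sum_nonneg fun i _ => hVI i
  have keyL : thetaSum θ w.1 - thetaSum θ wt.1 + dotW (w - wt) (Fop A b wt)
      = (∑ i, (θ i (w.1 i) - θ i (wt.1 i) +
          ((A i).mulVec (w.1 i) - (A i).mulVec (wt.1 i)) ⬝ᵥ
            (β • ((A i).mulVec (wt.1 i) - uOf ξk i) - lamOf ξk)))
        + (Pmap A w - Pmap A wt) ⬝ᵥ (calQ p m β).mulVec (ξk - Pmap A wt) := by
    rw [qform]
    have t1 : ∀ i : Fin p, (w.1 i - wt.1 i) ⬝ᵥ (-((A i)ᵀ.mulVec wt.2))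
        = -(((A i).mulVec (w.1 i) - (A i).mulVec (wt.1 i)) ⬝ᵥ wt.2) := by
      intro i
      rw [dotProduct_neg, Matrix.dotProduct_mulVec, Matrix.vecMul_transpose,
        Matrix.mulVec_sub]
    simp only [thetaSum, dotW, Fop, Prod.fst_sub, Prod.snd_sub, Pi.sub_apply, t1]
    simp only [Pmap, Sum.elim_inl, Sum.elim_inr, Pi.sub_apply, dotProduct,
      Pi.smul_apply, Pi.sub_apply, smul_eq_mul, uOf, lamOf, Finset.sum_apply,
      Finset.sum_sub_distrib, Finset.sum_add_distrib, Finset.sum_neg_distrib]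
    have hl : ∀ j : Fin m, wt.2 j = ξk (Sum.inr (), j) - β * ((∑ i, ξk (Sum.inl i, j)) - b j) := by
      intro j
      have := congrFun hlam j
      simpa [lamOf, uOf, Finset.sum_apply] using this
    have lam_part : ∀ j : Fin m, (w.2 j - wt.2 j) * ((∑ i, (A i).mulVec (wt.1 i) j) - b j)
        = (w.2 j - wt.2 j) * ((1/β) * (ξk (Sum.inr (), j) - wt.2 j)
            - ((∑ i, ξk (Sum.inl i, j)) - ∑ i, (A i).mulVec (wt.1 i) j)) := by
      intro j
      rw [hl j]
      field_simp
      try ring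
    have hT : (∑ j : Fin m, (w.2 j - wt.2 j) * ((∑ i, (A i).mulVec (wt.1 i) j) - b j))
        = ∑ j : Fin m, (w.2 j - wt.2 j) * ((1/β) * (ξk (Sum.inr (), j) - wt.2 j)
            - ((∑ i, ξk (Sum.inl i, j)) - ∑ i, (A i).mulVec (wt.1 i) j)) :=
      Finset.sum_congr rfl fun j _ => lam_part j
    have hS : (∑ i : Fin p, ∑ j : Fin m, ((A i).mulVec (w.1 i) j - (A i).mulVec (wt.1 i) j)
            * (β * ((A i).mulVec (wt.1 i) j - ξk (Sum.inl i, j)) - ξk (Sum.inr (), j)))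
        + (∑ i : Fin p, ∑ j : Fin m, ((A i).mulVec (w.1 i) j - (A i).mulVec (wt.1 i) j)
            * (β * (ξk (Sum.inl i, j) - (A i).mulVec (wt.1 i) j) + (ξk (Sum.inr (), j) - wt.2 j)))
        = -∑ i : Fin p, ∑ j : Fin m, ((A i).mulVec (w.1 i) j - (A i).mulVec (wt.1 i) j) * wt.2 j := by
      rw [← Finset.sum_add_distrib, ← Finset.sum_neg_distrib]
      refine Finset.sum_congr rfl fun i _ => ?_
      rw [← Finset.sum_add_distrib, ← Finset.sum_neg_distrib]
      exact Finset.sum_congr rfl fun j _ => by ring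
    linarith [hT, hS]
  rw [ge_iff_le, keyL]
  exact le_add_of_nonneg_left hsum
end
end

section
/- Let ξ, ξ^k, ξ̃^k ∈ ℝ^{(p+1)m}, let α be a nonzero real, and set ξ^{k+1} = ξ^k − αℳ(ξ^k − ξ̃^k). Then (ξ − ξ̃^k)ᵀ𝒬(ξ^k − ξ̃^k) = (1/(2α))(‖ξ − ξ^{k+1}‖²_ℋ − ‖ξ − ξ^k‖²_ℋ) + ((2 − α)/2)‖ξ^k − ξ̃^k‖²_𝒟. -/
open Matrix
open scoped Kronecker

noncomputable section

section AuxLemmas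

lemma hp1aux (p : ℕ) : ((p:ℝ) + 1) ≠ 0 := by positivity

lemma H0_mul_M0 (p : ℕ) {β : ℝ} (hβ : β ≠ 0) : H0 p β * M0 p β = Q0 p β := by
  ext i j
  rcases i with a | _ <;> rcases j with b | _ <;>
    simp [H0, M0, Q0, Matrix.mul_apply, Fintype.sum_sum_type, Matrix.one_apply,
      Finset.sum_ite_eq, Finset.sum_ite_eq', Finset.sum_add_distrib, Finset.sum_sub_distrib,
      Finset.sum_const, Finset.card_univ, nsmul_eq_mul, mul_sub, mul_add, add_mul, sub_mul] <;>
  · have hp : ((p:ℝ) + 1) ≠ 0 := by positivity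
    (try split_ifs) <;> (try simp_all [eq_comm]) <;> (try field_simp) <;> ring

lemma Q0t_mul_M0 (p : ℕ) {β : ℝ} (hβ : β ≠ 0) : (Q0 p β)ᵀ * M0 p β = D0 p β := by
  ext i j
  rcases i with a | _ <;> rcases j with b | _ <;>
    simp [Q0, M0, D0, Matrix.mul_apply, Fintype.sum_sum_type, Matrix.one_apply,
      Finset.sum_ite_eq, Finset.sum_ite_eq', Finset.sum_add_distrib, Finset.sum_sub_distrib,
      Finset.sum_const, Finset.card_univ, nsmul_eq_mul, mul_sub, mul_add, add_mul, sub_mul] <;>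
  · have hp : ((p:ℝ) + 1) ≠ 0 := by positivity
    (try split_ifs) <;> (try simp_all [eq_comm]) <;> (try field_simp) <;> ring

lemma Q0_add_t (p : ℕ) (β : ℝ) : Q0 p β + (Q0 p β)ᵀ = (2:ℝ) • D0 p β := by
  ext i j
  rcases i with a | _ <;> rcases j with b | _ <;>
    simp [Q0, D0, Matrix.one_apply] <;>
  · (try split_ifs) <;> (try simp_all [eq_comm]) <;> ring

lemma H0_symm (p : ℕ) (β : ℝ) : (H0 p β)ᵀ = H0 p β := by
  ext i j
  rcases i with a | _ <;> rcases j with b | _ <;>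
    simp [H0, Matrix.one_apply] <;> aesop

lemma D0_symm (p : ℕ) (β : ℝ) : (D0 p β)ᵀ = D0 p β := by
  ext i j
  rcases i with a | _ <;> rcases j with b | _ <;> simp [D0, Matrix.one_apply] <;> aesop

-- lifted versions
lemma calH_mul_calM (p m : ℕ) {β : ℝ} (hβ : β ≠ 0) :
    calH p m β * calM p m β = calQ p m β := by
  rw [calH, calM, calQ, ← Matrix.mul_kronecker_mul, Matrix.one_mul, H0_mul_M0 p hβ]

lemma calQ_transpose_mul_calM (p m : ℕ) {β : ℝ} (hβ : β ≠ 0) :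
    (calQ p m β)ᵀ * calM p m β = calD p m β := by
  rw [calQ, calM, calD, ← Matrix.kroneckerMap_transpose, Matrix.transpose_one,
    ← Matrix.mul_kronecker_mul, Matrix.one_mul, Q0t_mul_M0 p hβ]

lemma calQ_add_t (p m : ℕ) (β : ℝ) :
    calQ p m β + (calQ p m β)ᵀ = (2:ℝ) • calD p m β := by
  rw [calQ, calD, ← Matrix.kroneckerMap_transpose, Matrix.transpose_one,
    ← Matrix.add_kronecker, Q0_add_t, Matrix.smul_kronecker]

lemma calH_symm (p m : ℕ) (β : ℝ) : (calH p m β)ᵀ = calH p m β := by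
  rw [calH, ← Matrix.kroneckerMap_transpose, Matrix.transpose_one, H0_symm]

end AuxLemmas

lemma calD_symm (p m : ℕ) (β : ℝ) : (calD p m β)ᵀ = calD p m β := by
  rw [calD, ← Matrix.kroneckerMap_transpose, Matrix.transpose_one, D0_symm]

/-- If `ξ^{k+1} = ξ^k − αℳ(ξ^k − ξ̃^k)` with `α ≠ 0`, then
`(ξ − ξ̃^k)ᵀ𝒬(ξ^k − ξ̃^k) = (1/(2α))(‖ξ − ξ^{k+1}‖²_ℋ − ‖ξ − ξ^k‖²_ℋ)
+ ((2 − α)/2)‖ξ^k − ξ̃^k‖²_𝒟`. -/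
theorem stmt8 {p m : ℕ} (hp : 1 ≤ p) (hm : 1 ≤ m) {β : ℝ} (hβ : 0 < β)
    {α : ℝ} (hα : α ≠ 0)
    (ξ ξk ξt ξk1 : (Fin p ⊕ Unit) × Fin m → ℝ)
    (hrel : ξk1 = ξk - α • (calM p m β).mulVec (ξk - ξt)) :
    (ξ - ξt) ⬝ᵥ (calQ p m β).mulVec (ξk - ξt) =
      1 / (2 * α) * (nsq (calH p m β) (ξ - ξk1) - nsq (calH p m β) (ξ - ξk)) +
        (2 - α) / 2 * nsq (calD p m β) (ξk - ξt) := by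
  have hβ' : β ≠ 0 := ne_of_gt hβ
  have hHM := calH_mul_calM p m (β := β) hβ'
  have hQM := calQ_transpose_mul_calM p m (β := β) hβ'
  have hQQ := calQ_add_t p m β
  have hHs := calH_symm p m β
  have hDs := calD_symm p m β
  set Q := calQ p m β
  set D := calD p m β
  set M := calM p m β
  set H := calH p m β
  set a : (Fin p ⊕ Unit) × Fin m → ℝ := ξ - ξk with ha
  set v : (Fin p ⊕ Unit) × Fin m → ℝ := ξk - ξt with hv
  set w : (Fin p ⊕ Unit) × Fin m → ℝ := M.mulVec v with hw
  have h1 : ξ - ξt = a + v := by rw [ha, hv]; abel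
  have h2 : ξ - ξk1 = a + α • w := by rw [hrel, hw, hv, ha]; abel
  have haw : H.mulVec w = Q.mulVec v := by rw [hw, Matrix.mulVec_mulVec, hHM]
  have hMtQ : Mᵀ * Q = D := by
    have h := congrArg Matrix.transpose hQM
    rwa [Matrix.transpose_mul, Matrix.transpose_transpose, hDs] at h
  have hww : w ⬝ᵥ Q.mulVec v = v ⬝ᵥ D.mulVec v := by
    rw [hw, dotProduct_comm, Matrix.dotProduct_mulVec, ← Matrix.mulVec_transpose,
      Matrix.mulVec_mulVec, hMtQ, dotProduct_comm]
  have hQt : v ⬝ᵥ (Qᵀ).mulVec v = v ⬝ᵥ Q.mulVec v := by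
    rw [Matrix.mulVec_transpose, dotProduct_comm, ← Matrix.dotProduct_mulVec]
  have hvQ : v ⬝ᵥ Q.mulVec v = v ⬝ᵥ D.mulVec v := by
    have h := congrArg (fun X => v ⬝ᵥ X.mulVec v) hQQ
    simp only [Matrix.add_mulVec, dotProduct_add, Matrix.smul_mulVec, dotProduct_smul,
      smul_eq_mul] at h
    rw [hQt] at h; linarith
  have hwa : w ⬝ᵥ H.mulVec a = a ⬝ᵥ Q.mulVec v := by
    rw [Matrix.dotProduct_mulVec, ← Matrix.mulVec_transpose, hHs, haw, dotProduct_comm]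
  rw [h1, h2, nsq, nsq, nsq]
  simp only [Matrix.mulVec_add, Matrix.mulVec_smul, dotProduct_add, add_dotProduct,
    dotProduct_smul, smul_dotProduct, smul_eq_mul]
  rw [haw, hww, hwa, hvQ]
  field_simp
  ring
end
end

section
/- Let ξ^k, ξ̃^k, ξ* ∈ ℝ^{(p+1)m} satisfy (ξ̃^k − ξ*)ᵀ𝒬(ξ^k − ξ̃^k) ≥ 0. Then (ξ^k − ξ*)ᵀ𝒬(ξ^k − ξ̃^k) ≥ ‖ξ^k − ξ̃^k‖²_𝒟, and consequently the direction d = −ℳ(ξ^k − ξ̃^k) satisfies (ξ^k − ξ*)ᵀℋ d ≤ −‖ξ^k − ξ̃^k‖²_𝒟, i.e., d is a descent direction for the function ξ ↦ (1/2)‖ξ − ξ*‖²_ℋ at ξ^k. -/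
open Matrix
open scoped Kronecker

noncomputable section

lemma skew_zero {n : Type*} [Fintype n] (S : Matrix n n ℝ) (h : Sᵀ = -S) (v : n → ℝ) :
    v ⬝ᵥ S.mulVec v = 0 := by
  have key : v ᵥ* S = -(S *ᵥ v) := by rw [← Matrix.mulVec_transpose, h, Matrix.neg_mulVec]
  have h1 : v ⬝ᵥ S *ᵥ v = v ᵥ* S ⬝ᵥ v := Matrix.dotProduct_mulVec v S v
  rw [key, neg_dotProduct] at h1
  have h2 : S *ᵥ v ⬝ᵥ v = v ⬝ᵥ S *ᵥ v := dotProduct_comm _ _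
  linarith

lemma calQD_skew (p m : ℕ) (β : ℝ) :
    (calQ p m β - calD p m β)ᵀ = -(calQ p m β - calD p m β) := by
  ext ⟨i, a⟩ ⟨j, b⟩
  rcases i with i | i <;> rcases j with j | j <;>
    simp [calQ, calD, Q0, D0, Matrix.kroneckerMap_apply, Matrix.one_apply, eq_comm] <;>
    split_ifs <;> norm_num

lemma Q_dot_eq_D (p m : ℕ) (β : ℝ) (v : (Fin p ⊕ Unit) × Fin m → ℝ) :
    v ⬝ᵥ (calQ p m β).mulVec v = nsq (calD p m β) v := by
  have h0 := skew_zero _ (calQD_skew p m β) v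
  rw [Matrix.sub_mulVec, dotProduct_sub, sub_eq_zero] at h0
  exact h0

theorem stmt12' {p m : ℕ} (hp : 1 ≤ p) (hm : 1 ≤ m) {β : ℝ} (hβ : 0 < β)
    (ξk ξt ξs : (Fin p ⊕ Unit) × Fin m → ℝ)
    (hyp : (ξt - ξs) ⬝ᵥ (calQ p m β).mulVec (ξk - ξt) ≥ 0) :
    (ξk - ξs) ⬝ᵥ (calQ p m β).mulVec (ξk - ξt) ≥ nsq (calD p m β) (ξk - ξt) ∧
      (ξk - ξs) ⬝ᵥ (calH p m β).mulVec (-((calM p m β).mulVec (ξk - ξt))) ≤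
        -nsq (calD p m β) (ξk - ξt) := by
  set v := ξk - ξt with hv
  have hsplit : ξk - ξs = v + (ξt - ξs) := (sub_add_sub_cancel ξk ξt ξs).symm
  have part1 : (ξk - ξs) ⬝ᵥ (calQ p m β).mulVec v ≥ nsq (calD p m β) v := by
    rw [hsplit, add_dotProduct, Q_dot_eq_D]
    linarith
  refine ⟨part1, ?_⟩
  have hHM : calH p m β * calM p m β = calQ p m β := by
    unfold calH calM calQ
    rw [← Matrix.mul_kronecker_mul, H0_mul_M0 p hβ.ne', Matrix.one_mul]
  have : (calH p m β).mulVec (-((calM p m β).mulVec v)) = -((calQ p m β).mulVec v) := by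
    rw [Matrix.mulVec_neg, Matrix.mulVec_mulVec, hHM]
  rw [this, dotProduct_neg]
  linarith

/-- If `(ξ̃^k − ξ*)ᵀ𝒬(ξ^k − ξ̃^k) ≥ 0`, then `(ξ^k − ξ*)ᵀ𝒬(ξ^k − ξ̃^k) ≥ ‖ξ^k − ξ̃^k‖²_𝒟`,
and consequently `d = −ℳ(ξ^k − ξ̃^k)` satisfies `(ξ^k − ξ*)ᵀℋd ≤ −‖ξ^k − ξ̃^k‖²_𝒟`,
i.e. `d` is a descent direction of `ξ ↦ (1/2)‖ξ − ξ*‖²_ℋ` at `ξ^k`. -/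
theorem stmt12 {p m : ℕ} (hp : 1 ≤ p) (hm : 1 ≤ m) {β : ℝ} (hβ : 0 < β)
    (ξk ξt ξs : (Fin p ⊕ Unit) × Fin m → ℝ)
    (hyp : (ξt - ξs) ⬝ᵥ (calQ p m β).mulVec (ξk - ξt) ≥ 0) :
    (ξk - ξs) ⬝ᵥ (calQ p m β).mulVec (ξk - ξt) ≥ nsq (calD p m β) (ξk - ξt) ∧
      (ξk - ξs) ⬝ᵥ (calH p m β).mulVec (-((calM p m β).mulVec (ξk - ξt))) ≤
        -nsq (calD p m β) (ξk - ξt) := by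
  exact stmt12' hp hm hβ ξk ξt ξs hyp
end
end
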